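/- Let p be a prime and let F_p be the field with p elements. Then the quotient algebra F_p[t_1,…,t_p] / ( t_1·t_i − (i+1)·t_{i+1} for 1 ≤ i ≤ p−1, t_1·t_p ) is isomorphic as an F_p-algebra to F_p[u,v]/(u^p, u·v), via an isomorphism sending the class of t_1 to the class of u and the class of t_p to the class of v. In particular this quotient is infinite-dimensional over F_p. -/

import Mathlib

/-!
In the quotient, the relations `t₁ tₖ = (k+1) tₖ₊₁` give `t₁ᵏ = k! tₖ` by induction.
Since `k!` is a unit for `k < p`, every `tₖ` with `k < p` is the divided power `t₁ᵏ / k!`,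
while `t₁ᵖ = p! tₚ = 0` and `t₁ tₚ = 0`. So the quotient is generated by `u = t₁` and
`v = tₚ` subject to `uᵖ = 0` and `uv = 0`; the inverse isomorphism sends `tₖ ↦ uᵏ / k!`
for `k < p` and `tₚ ↦ v`.
Killing `u` maps `F_p[u,v]/(uᵖ, uv)` onto `F_p[v]`, so the quotient is infinite-dimensional.
-/

open MvPolynomial
open scoped Nat

theorem cast_factorial_ne_zero_of_lt {R : Type*} [AddMonoidWithOne R] {p : ℕ} [CharP R p]
    (hp : p.Prime) {k : ℕ} (hk : k < p) : (k ! : R) ≠ 0 := by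
  rw [Ne, CharP.cast_eq_zero_iff R p, hp.dvd_factorial]
  omega

theorem pow_succ_eq_factorial_nsmul {A : Type*} [CommSemiring A] {m : ℕ} (t : Fin (m + 1) → A)
    (ht : ∀ i : Fin m, t 0 * t i.castSucc = ((i : ℕ) + 2) • t i.succ) (k : Fin (m + 1)) :
    t 0 ^ ((k : ℕ) + 1) = ((k : ℕ) + 1)! • t k := by
  induction k using Fin.induction with
  | zero => simp
  | succ i ih =>
    rw [Fin.val_castSucc] at ih
    rw [Fin.val_succ, pow_succ, ih, smul_mul_assoc, mul_comm (t _), ht, smul_smul,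
      Nat.factorial_succ (i + 1), mul_comm]

theorem mul_inv_factorial_smul_pow {K A : Type*} [Semifield K] [Semiring A] [Algebra K A]
    (u : A) {k : ℕ} (hk : ((k + 1)! : K) ≠ 0) :
    u * ((k ! : K)⁻¹ • u ^ k) = (k + 1) • (((k + 1)! : K)⁻¹ • u ^ (k + 1)) := by
  rw [Nat.factorial_succ, Nat.cast_mul] at *
  rw [← Nat.cast_smul_eq_nsmul K, smul_smul, mul_smul_comm, ← pow_succ' u k, mul_inv,
    mul_inv_cancel_left₀ (left_ne_zero_of_mul hk)]

theorem map_eq_zero_of_mem_span {R S F : Type*} [Semiring R] [Semiring S] [FunLike F R S]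
    [RingHomClass F R S] (f : F) {s : Set R} (hs : ∀ x ∈ s, f x = 0) :
    ∀ a ∈ Ideal.span s, f a = 0 :=
  fun _ ha => Ideal.span_le (I := RingHom.ker f).2 hs ha

namespace UnknotQuotient

open Ideal.Quotient

noncomputable section

section

variable (R : Type*) [CommRing R] (n : ℕ)

/-- For `p = n + 2`, with `tⱼ₊₁` the variable `X j`. -/
def unknotIdeal : Ideal (MvPolynomial (Fin (n + 2)) R) :=
  Ideal.span (Set.range (fun i : Fin (n + 1) =>
      (X 0 * X i.castSucc - ((i : ℕ) + 2) • X i.succ : MvPolynomial (Fin (n + 2)) R)) ∪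
    {X 0 * X (Fin.last (n + 1))})

def powMulIdeal : Ideal (MvPolynomial (Fin 2) R) :=
  Ideal.span {X 0 ^ (n + 2), X 0 * X 1}

abbrev UnknotAlgebra := MvPolynomial (Fin (n + 2)) R ⧸ unknotIdeal R n

abbrev PowMulAlgebra := MvPolynomial (Fin 2) R ⧸ powMulIdeal R n

theorem mk_X_zero_mul_X_castSucc (i : Fin (n + 1)) :
    mk (unknotIdeal R n) (X 0) * mk _ (X i.castSucc) = ((i : ℕ) + 2) • mk _ (X i.succ) := by
  rw [← map_mul, ← map_nsmul, ← sub_eq_zero, ← map_sub, eq_zero_iff_mem]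
  exact Ideal.subset_span (Or.inl ⟨i, rfl⟩)

theorem mk_X_zero_mul_X_last :
    mk (unknotIdeal R n) (X 0) * mk _ (X (Fin.last (n + 1))) = 0 := by
  rw [← map_mul, eq_zero_iff_mem]
  exact Ideal.subset_span (Or.inr rfl)

theorem mk_X_zero_pow (k : Fin (n + 2)) :
    mk (unknotIdeal R n) (X 0) ^ ((k : ℕ) + 1) = ((k : ℕ) + 1)! • mk _ (X k) :=
  pow_succ_eq_factorial_nsmul (fun j => mk (unknotIdeal R n) (X j))
    (mk_X_zero_mul_X_castSucc R n) k

theorem powMul_mk_X_zero_pow : mk (powMulIdeal R n) (X 0) ^ (n + 2) = 0 := by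
  rw [← map_pow, eq_zero_iff_mem]
  exact Ideal.subset_span (Set.mem_insert _ _)

theorem powMul_mk_X_zero_mul_X_one : mk (powMulIdeal R n) (X 0) * mk _ (X 1) = 0 := by
  rw [← map_mul, eq_zero_iff_mem]
  exact Ideal.subset_span (Set.mem_insert_of_mem _ rfl)

def toPolynomial : PowMulAlgebra R n →ₐ[R] Polynomial R :=
  liftₐ _ (aeval ![0, Polynomial.X]) <| map_eq_zero_of_mem_span _ <| by
    rintro _ (rfl | rfl) <;> simp

theorem toPolynomial_mk (a : MvPolynomial (Fin 2) R) :
    toPolynomial R n (mk _ a) = aeval ![0, Polynomial.X] a :=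
  lift_mk _ _ _

theorem toPolynomial_surjective : Function.Surjective (toPolynomial R n) := fun f =>
  ⟨mk _ (Polynomial.aeval (X 1) f), by
    rw [toPolynomial_mk, ← Polynomial.aeval_algHom_apply]
    simp⟩

theorem not_finite_powMulAlgebra [Nontrivial R] :
    ¬ Module.Finite R (PowMulAlgebra R n) := fun _ =>
  Polynomial.not_finite
    (Module.Finite.of_surjective (toPolynomial R n).toLinearMap (toPolynomial_surjective R n))

end

variable (K : Type*) [Field K] (n : ℕ)

/-- The factorials inverted here are nonzero once `K` has characteristic `n + 2`. -/
def toPowMulGens : Fin (n + 2) → PowMulAlgebra K n :=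
  Fin.lastCases (mk _ (X 1)) fun i => ((((i : ℕ) + 1)! : K))⁻¹ • mk _ (X 0) ^ ((i : ℕ) + 1)

theorem toPowMulGens_castSucc (i : Fin (n + 1)) : toPowMulGens K n i.castSucc =
    ((((i : ℕ) + 1)! : K))⁻¹ • mk _ (X 0) ^ ((i : ℕ) + 1) :=
  Fin.lastCases_castSucc i

theorem toPowMulGens_zero : toPowMulGens K n 0 = mk _ (X 0) := by
  rw [← Fin.castSucc_zero, toPowMulGens_castSucc]
  simp

theorem toPowMulGens_last : toPowMulGens K n (Fin.last (n + 1)) = mk _ (X 1) :=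
  Fin.lastCases_last

variable [CharP K (n + 2)]

theorem cast_factorial_ne_zero {k : ℕ} (hk : k ≤ n + 1) : (k ! : K) ≠ 0 :=
  cast_factorial_ne_zero_of_lt (CharP.char_is_prime_of_two_le K (n + 2) (by omega)) (by omega)

theorem mk_X_zero_pow_eq_zero : mk (unknotIdeal K n) (X 0) ^ (n + 2) = 0 := by
  change _ ^ ((Fin.last (n + 1) : ℕ) + 1) = 0
  rw [mk_X_zero_pow K n (Fin.last (n + 1)), Fin.val_last, ← Nat.cast_smul_eq_nsmul K,
    (CharP.cast_eq_zero_iff K (n + 2) (n + 1 + 1)!).2 (Nat.dvd_factorial (by omega) le_rfl),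
    zero_smul]

theorem toPowMulGens_zero_mul_castSucc (i : Fin (n + 1)) :
    toPowMulGens K n 0 * toPowMulGens K n i.castSucc =
      ((i : ℕ) + 2) • toPowMulGens K n i.succ := by
  rw [toPowMulGens_zero]
  induction i using Fin.lastCases with
  | last =>
    rw [Fin.succ_last, toPowMulGens_last, toPowMulGens_castSucc, mul_smul_comm,
      ← pow_succ' _ (_ + 1), Fin.val_last, powMul_mk_X_zero_pow, smul_zero,
      ← Nat.cast_smul_eq_nsmul K, CharP.cast_eq_zero, zero_smul]
  | cast j =>
    rw [Fin.succ_castSucc, toPowMulGens_castSucc, toPowMulGens_castSucc, Fin.val_castSucc,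
      Fin.val_succ]
    exact mul_inv_factorial_smul_pow _ (cast_factorial_ne_zero K n (by omega))

def toPowMul : UnknotAlgebra K n →ₐ[K] PowMulAlgebra K n :=
  liftₐ _ (aeval (toPowMulGens K n)) <| map_eq_zero_of_mem_span _ <| by
    rintro _ (⟨i, rfl⟩ | rfl)
    · simp only [map_sub, map_mul, map_nsmul, aeval_X, toPowMulGens_zero_mul_castSucc, sub_self]
    · rw [map_mul, aeval_X, aeval_X, toPowMulGens_zero, toPowMulGens_last,
        powMul_mk_X_zero_mul_X_one]

def ofPowMul : PowMulAlgebra K n →ₐ[K] UnknotAlgebra K n :=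
  liftₐ _ (aeval ![mk _ (X 0), mk _ (X (Fin.last (n + 1)))]) <| map_eq_zero_of_mem_span _ <| by
    rintro _ (rfl | rfl)
    · simp [mk_X_zero_pow_eq_zero]
    · simp [mk_X_zero_mul_X_last]

@[simp]
theorem toPowMul_mk (a : MvPolynomial (Fin (n + 2)) K) :
    toPowMul K n (mk _ a) = aeval (toPowMulGens K n) a :=
  lift_mk _ _ _

@[simp]
theorem ofPowMul_mk (a : MvPolynomial (Fin 2) K) :
    ofPowMul K n (mk _ a) = aeval ![mk _ (X 0), mk _ (X (Fin.last (n + 1)))] a :=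
  lift_mk _ _ _

theorem ofPowMul_comp_toPowMul : (ofPowMul K n).comp (toPowMul K n) = AlgHom.id K _ := by
  refine Ideal.Quotient.algHom_ext K (MvPolynomial.algHom_ext fun j => ?_)
  induction j using Fin.lastCases with
  | last => simp [toPowMulGens_last]
  | cast i =>
    have hpow := mk_X_zero_pow K n i.castSucc
    rw [Fin.val_castSucc] at hpow
    simp only [AlgHom.comp_apply, mkₐ_eq_mk, toPowMul_mk, aeval_X, toPowMulGens_castSucc,
      map_smul, map_pow, ofPowMul_mk, Matrix.cons_val_zero, AlgHom.id_apply]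
    rw [hpow, ← Nat.cast_smul_eq_nsmul K, smul_smul,
      inv_mul_cancel₀ (cast_factorial_ne_zero K n i.is_lt), one_smul]

theorem toPowMul_comp_ofPowMul : (toPowMul K n).comp (ofPowMul K n) = AlgHom.id K _ := by
  refine Ideal.Quotient.algHom_ext K (MvPolynomial.algHom_ext fun j => ?_)
  fin_cases j
  · simp [toPowMulGens_zero]
  · simp [toPowMulGens_last]

def unknotEquiv : UnknotAlgebra K n ≃ₐ[K] PowMulAlgebra K n :=
  .ofAlgHom (toPowMul K n) (ofPowMul K n) (toPowMul_comp_ofPowMul K n) (ofPowMul_comp_toPowMul K n)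

theorem unknotEquiv_mk_X_zero : unknotEquiv K n (mk _ (X 0)) = mk _ (X 0) := by
  simp [unknotEquiv, toPowMulGens_zero]

theorem unknotEquiv_mk_X_last :
    unknotEquiv K n (mk _ (X (Fin.last (n + 1)))) = mk _ (X 1) := by
  simp [unknotEquiv, toPowMulGens_last]

theorem not_finite_unknotAlgebra : ¬ Module.Finite K (UnknotAlgebra K n) := fun _ =>
  not_finite_powMulAlgebra K n (Module.Finite.equiv (unknotEquiv K n).toLinearEquiv)

end

end UnknotQuotient

/-- Let `p` be a prime. Then
`F_p[t_1,…,t_p]/(t₁t_i - (i+1)t_{i+1} (1 ≤ i ≤ p-1), t₁t_p)` is isomorphic as an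
`F_p`-algebra to `F_p[u,v]/(u^p, uv)`, sending the class of `t₁` to the class of `u` and the
class of `t_p` to the class of `v`; in particular this quotient is infinite-dimensional over
`F_p`.  (Here `t_j` is the variable `X ⟨j-1⟩`.) -/
theorem unknot_quotient_char_p (p : ℕ) (hp : p.Prime) :
    (∃ e : (MvPolynomial (Fin p) (ZMod p) ⧸
              Ideal.span (Set.range (fun i : Fin (p - 1) =>
                  (X (⟨0, hp.pos⟩ : Fin p) *
                      X (⟨(i : ℕ), lt_of_lt_of_le i.isLt (Nat.sub_le p 1)⟩ : Fin p) -
                    ((i : ℕ) + 2) •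
                      X (⟨(i : ℕ) + 1, by have := i.isLt; omega⟩ : Fin p) :
                    MvPolynomial (Fin p) (ZMod p))) ∪
                {X (⟨0, hp.pos⟩ : Fin p) * X (⟨p - 1, Nat.sub_lt hp.pos one_pos⟩ : Fin p)}))
          ≃ₐ[ZMod p]
          (MvPolynomial (Fin 2) (ZMod p) ⧸
            Ideal.span {(X 0 ^ p : MvPolynomial (Fin 2) (ZMod p)), X 0 * X 1}),
        e (Ideal.Quotient.mk _ (X (⟨0, hp.pos⟩ : Fin p))) =
            Ideal.Quotient.mk _ (X (0 : Fin 2)) ∧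
        e (Ideal.Quotient.mk _ (X (⟨p - 1, Nat.sub_lt hp.pos one_pos⟩ : Fin p))) =
            Ideal.Quotient.mk _ (X (1 : Fin 2))) ∧
    ¬ Module.Finite (ZMod p)
        (MvPolynomial (Fin p) (ZMod p) ⧸
          Ideal.span (Set.range (fun i : Fin (p - 1) =>
              (X (⟨0, hp.pos⟩ : Fin p) *
                  X (⟨(i : ℕ), lt_of_lt_of_le i.isLt (Nat.sub_le p 1)⟩ : Fin p) -
                ((i : ℕ) + 2) •
                  X (⟨(i : ℕ) + 1, by have := i.isLt; omega⟩ : Fin p) :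
                MvPolynomial (Fin p) (ZMod p))) ∪
            {X (⟨0, hp.pos⟩ : Fin p) * X (⟨p - 1, Nat.sub_lt hp.pos one_pos⟩ : Fin p)})) := by
  obtain ⟨n, rfl⟩ : ∃ n, p = n + 2 := ⟨p - 2, by have := hp.two_le; omega⟩
  have : Fact (n + 2).Prime := ⟨hp⟩
  -- the two ideals of the statement are now definitionally `unknotIdeal` and `powMulIdeal`
  exact ⟨⟨UnknotQuotient.unknotEquiv (ZMod (n + 2)) n,
      UnknotQuotient.unknotEquiv_mk_X_zero _ n, UnknotQuotient.unknotEquiv_mk_X_last _ n⟩,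
    UnknotQuotient.not_finite_unknotAlgebra _ n⟩
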